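/- arXiv:cs/0607016 — 8 statements merged into one kernel-verified Lean document; each statement's English description precedes it below -/
import Mathlib

section
/- Let [a..b] and [c..d] be nonempty integer intervals with 0 ∉ [a..b], c < 0 and 0 < d. Then the smallest integer interval containing [a..b]/[c..d] is [-e..e], where e = max(|a|,|b|). -/
/-- If `0 ∉ [a..b]`, `c < 0 < d` and both intervals are nonempty, then the smallest
integer interval containing `[a..b]/[c..d]` is `[-e..e]` with `e = max |a| |b|`:
the division set is contained in `[-e..e]` and both endpoints are attained. -/
theorem stmt_6 (a b c d : ℤ) (hab : a ≤ b) (hcd : c ≤ d)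
    (h0 : (0 : ℤ) ∉ Set.Icc a b) (hc : c < 0) (hd : 0 < d) :
    {u : ℤ | ∃ x ∈ Set.Icc a b, ∃ y ∈ Set.Icc c d, u * y = x} ⊆
      Set.Icc (-(max |a| |b|)) (max |a| |b|) ∧
    -(max |a| |b|) ∈ {u : ℤ | ∃ x ∈ Set.Icc a b, ∃ y ∈ Set.Icc c d, u * y = x} ∧
    max |a| |b| ∈ {u : ℤ | ∃ x ∈ Set.Icc a b, ∃ y ∈ Set.Icc c d, u * y = x} := by
  simp only [Set.mem_Icc, not_and, not_le] at h0
  have hcase : b < 0 ∨ 0 < a := by omega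
  have h1 : (1:ℤ) ∈ Set.Icc c d := ⟨by omega, by omega⟩
  have hm1 : (-1:ℤ) ∈ Set.Icc c d := ⟨by omega, by omega⟩
  refine ⟨?_, ?_, ?_⟩
  · rintro u ⟨x, hx, y, hy, hxy⟩
    have hx0 : x ≠ 0 := by rcases hx with ⟨h1', h2'⟩; omega
    have hy0 : y ≠ 0 := by rintro rfl; simp at hxy; exact hx0 hxy.symm
    have habs : |u| * |y| = |x| := by rw [← abs_mul, hxy]
    have h1y : 1 ≤ |y| := by
      rcases abs_pos.mpr hy0 with h; omega
    have hux : |u| ≤ |x| := by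
      calc |u| = |u| * 1 := (mul_one _).symm
        _ ≤ |u| * |y| := by exact mul_le_mul_of_nonneg_left h1y (abs_nonneg u)
        _ = |x| := habs
    have hxe : |x| ≤ max |a| |b| := abs_le_max_abs_abs hx.1 hx.2
    have := abs_le.mp (le_trans hux hxe)
    exact ⟨this.1, this.2⟩
  · rcases hcase with hb | ha
    · have he : max |a| |b| = -a := by
        rw [abs_of_neg (by omega : a < 0), abs_of_neg hb]; omega
      exact ⟨a, ⟨le_refl a, hab⟩, 1, h1, by omega⟩
    · have he : max |a| |b| = b := by
        rw [abs_of_pos ha, abs_of_pos (by omega : (0:ℤ) < b)]; omega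
      exact ⟨b, ⟨hab, le_refl b⟩, -1, hm1, by omega⟩
  · rcases hcase with hb | ha
    · have he : max |a| |b| = -a := by
        rw [abs_of_neg (by omega : a < 0), abs_of_neg hb]; omega
      exact ⟨a, ⟨le_refl a, hab⟩, -1, hm1, by omega⟩
    · have he : max |a| |b| = b := by
        rw [abs_of_pos ha, abs_of_pos (by omega : (0:ℤ) < b)]; omega
      exact ⟨b, ⟨hab, le_refl b⟩, 1, h1, by omega⟩
end

section
/- Let [a..b] and [c..d] be nonempty integer intervals with 0 ∉ [c..d]. Then every element of [a..b]/[c..d] lies in the integer interval [⌈min(A)⌉ .. ⌊max(A)⌋], where A = {a/c, a/d, b/c, b/d} computed with rational division. -/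
/-- If `0 ∉ [c..d]` and both intervals are nonempty, then every element of
`[a..b]/[c..d]` lies in `[⌈min A⌉ .. ⌊max A⌋]` with `A = {a/c, a/d, b/c, b/d}`
computed with rational division. -/
theorem stmt_7 (a b c d : ℤ) (hab : a ≤ b) (hcd : c ≤ d)
    (h0 : (0 : ℤ) ∉ Set.Icc c d) :
    ∀ u ∈ {u : ℤ | ∃ x ∈ Set.Icc a b, ∃ y ∈ Set.Icc c d, u * y = x},
      u ∈ Set.Icc
        ⌈min (min ((a : ℚ) / c) ((a : ℚ) / d)) (min ((b : ℚ) / c) ((b : ℚ) / d))⌉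
        ⌊max (max ((a : ℚ) / c) ((a : ℚ) / d)) (max ((b : ℚ) / c) ((b : ℚ) / d))⌋ := by
  rintro u ⟨x, ⟨hax, hxb⟩, y, ⟨hcy, hyd⟩, huy⟩
  rw [Set.mem_Icc, Int.ceil_le, Int.le_floor]
  simp only [Set.mem_Icc, not_and, not_le] at h0
  -- rational versions of hypotheses
  have hax' : (a : ℚ) ≤ x := by exact_mod_cast hax
  have hxb' : (x : ℚ) ≤ b := by exact_mod_cast hxb
  have hcy' : (c : ℚ) ≤ y := by exact_mod_cast hcy
  have hyd' : (y : ℚ) ≤ d := by exact_mod_cast hyd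
  have huy' : (u : ℚ) * y = x := by exact_mod_cast huy
  rcases le_or_gt c 0 with hc | hc
  · -- then d < 0
    have hd : d < 0 := h0 hc
    have hdq : (d : ℚ) < 0 := by exact_mod_cast hd
    have hcq : (c : ℚ) < 0 := lt_of_le_of_lt hcy' (lt_of_le_of_lt hyd' hdq)
    constructor
    · refine le_trans (min_le_right _ _) ?_
      rcases le_or_gt 0 (u : ℚ) with hu | hu
      · refine le_trans (min_le_left _ _) ?_
        rw [div_le_iff_of_neg hcq]
        nlinarith
      · refine le_trans (min_le_right _ _) ?_
        rw [div_le_iff_of_neg hdq]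
        nlinarith
    · refine le_trans ?_ (le_max_left _ _)
      rcases le_or_gt 0 (u : ℚ) with hu | hu
      · refine le_trans ?_ (le_max_right _ _)
        rw [le_div_iff_of_neg hdq]
        nlinarith
      · refine le_trans ?_ (le_max_left _ _)
        rw [le_div_iff_of_neg hcq]
        nlinarith
  · -- c > 0
    have hcq : (0 : ℚ) < c := by exact_mod_cast hc
    have hdq : (0 : ℚ) < d := lt_of_lt_of_le hcq (by exact_mod_cast hcd)
    constructor
    · refine le_trans (min_le_left _ _) ?_
      rcases le_or_gt 0 (u : ℚ) with hu | hu
      · refine le_trans (min_le_right _ _) ?_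
        rw [div_le_iff₀ hdq]
        nlinarith
      · refine le_trans (min_le_left _ _) ?_
        rw [div_le_iff₀ hcq]
        nlinarith
    · refine le_trans ?_ (le_max_right _ _)
      rcases le_or_gt 0 (u : ℚ) with hu | hu
      · refine le_trans ?_ (le_max_left _ _)
        rw [le_div_iff₀ hcq]
        nlinarith
      · refine le_trans ?_ (le_max_right _ _)
        rw [le_div_iff₀ hdq]
        nlinarith
end

section
/- With the alternative division X ÷ Y := {z/y ∈ ℤ | y∈Y, z∈Z, y ≠ 0} (exact integer quotients), the MULTIPLICATION 2 rule is not equivalence preserving: for the constraint x·y = z with domains x ∈ [-2..1], y ∈ [0..0], z ∈ [-8..10], the triple (x,y,z) = (0,0,0) is a solution, yet [-8..10] ÷ [0..0] = ∅, so intersecting the domain of x with it yields the empty domain. -/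
/-- With the alternative division `Z ÷ Y := {q : ℤ | ∃ y ∈ Y, ∃ z ∈ Z, y ≠ 0 ∧ q·y = z}`,
the MULTIPLICATION 2 rule is not equivalence preserving: `(0,0,0)` solves `x·y = z` with
`x ∈ [-2..1]`, `y ∈ [0..0]`, `z ∈ [-8..10]`, yet `[-8..10] ÷ [0..0] = ∅`, so intersecting
the domain of `x` with it yields the empty domain. -/
theorem stmt_11 :
    ((0 : ℤ) ∈ Set.Icc (-2 : ℤ) 1 ∧ (0 : ℤ) ∈ Set.Icc (0 : ℤ) 0 ∧
      (0 : ℤ) ∈ Set.Icc (-8 : ℤ) 10 ∧ (0 : ℤ) * 0 = 0) ∧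
    {q : ℤ | ∃ y ∈ Set.Icc (0 : ℤ) 0, ∃ z ∈ Set.Icc (-8 : ℤ) 10, y ≠ 0 ∧ q * y = z} =
      (∅ : Set ℤ) ∧
    Set.Icc (-2 : ℤ) 1 ∩
      {q : ℤ | ∃ y ∈ Set.Icc (0 : ℤ) 0, ∃ z ∈ Set.Icc (-8 : ℤ) 10, y ≠ 0 ∧ q * y = z} =
      (∅ : Set ℤ) := by
  have h : {q : ℤ | ∃ y ∈ Set.Icc (0 : ℤ) 0, ∃ z ∈ Set.Icc (-8 : ℤ) 10, y ≠ 0 ∧ q * y = z} =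
      (∅ : Set ℤ) := by
    ext q
    simp only [Set.mem_setOf_eq, Set.mem_Icc, Set.mem_empty_iff_false, iff_false]
    rintro ⟨y, hy, z, hz, hy0, _⟩
    exact hy0 (le_antisymm hy.2 hy.1)
  refine ⟨by norm_num, h, by rw [h]; simp⟩
end

section
/- (Bounds consistency implies closure under MULTIPLICATION 1.) Let D_x = [l_x..h_x], D_y = [l_y..h_y], D_z = [l_z..h_z] be nonempty integer intervals such that for each c ∈ {l_z, h_z} there exist reals a ∈ [l_x,h_x] and b ∈ [l_y,h_y] with a·b = c, and similarly for the endpoints of D_x and D_y (bounds consistency of x·y = z). Then D_z ⊆ int(D_x · D_y). -/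
lemma scale_bounds {x p q : ℝ} (h1 : p ≤ x) (h2 : x ≤ q) (c : ℝ) :
    min (c * p) (c * q) ≤ c * x ∧ c * x ≤ max (c * p) (c * q) := by
  rcases le_total 0 c with hc | hc
  · exact ⟨min_le_of_left_le (by nlinarith), le_max_of_le_right (by nlinarith)⟩
  · exact ⟨min_le_of_right_le (by nlinarith), le_max_of_le_left (by nlinarith)⟩

lemma corner_bounds {p q r s a b : ℝ} (h1 : p ≤ a) (h2 : a ≤ q) (h3 : r ≤ b) (h4 : b ≤ s) :
    min (min (p*r) (p*s)) (min (q*r) (q*s)) ≤ a * b ∧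
      a * b ≤ max (max (p*r) (p*s)) (max (q*r) (q*s)) := by
  obtain ⟨hab1, hab2⟩ := scale_bounds h3 h4 a
  obtain ⟨h5, h6⟩ := scale_bounds h1 h2 r
  obtain ⟨h7, h8⟩ := scale_bounds h1 h2 s
  rw [mul_comm r p, mul_comm r q] at h5 h6
  rw [mul_comm s p, mul_comm s q] at h7 h8
  rw [mul_comm r a] at h5 h6
  rw [mul_comm s a] at h7 h8
  constructor
  · calc min (min (p*r) (p*s)) (min (q*r) (q*s))
        ≤ min (min (p*r) (q*r)) (min (p*s) (q*s)) := le_of_eq (min_min_min_comm _ _ _ _)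
      _ ≤ min (a*r) (a*s) := min_le_min h5 h7
      _ ≤ a * b := hab1
  · calc a * b ≤ max (a*r) (a*s) := hab2
      _ ≤ max (max (p*r) (q*r)) (max (p*s) (q*s)) := max_le_max h6 h8
      _ ≤ max (max (p*r) (p*s)) (max (q*r) (q*s)) := le_of_eq (max_max_max_comm _ _ _ _)

/-- Bounds consistency implies closure under MULTIPLICATION 1: if every endpoint of
each domain extends to a real solution of `x·y = z` in the real hulls of the other
two domains, then `D_z ⊆ int(D_x·D_y)`. -/
theorem stmt_13 (lx hx ly hy lz hz : ℤ)
    (hx' : lx ≤ hx) (hy' : ly ≤ hy) (hz' : lz ≤ hz)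
    (bcx : ∀ a ∈ ({lx, hx} : Set ℤ), ∃ b c : ℝ,
      b ∈ Set.Icc (ly : ℝ) (hy : ℝ) ∧ c ∈ Set.Icc (lz : ℝ) (hz : ℝ) ∧ (a : ℝ) * b = c)
    (bcy : ∀ b ∈ ({ly, hy} : Set ℤ), ∃ a c : ℝ,
      a ∈ Set.Icc (lx : ℝ) (hx : ℝ) ∧ c ∈ Set.Icc (lz : ℝ) (hz : ℝ) ∧ a * (b : ℝ) = c)
    (bcz : ∀ c ∈ ({lz, hz} : Set ℤ), ∃ a b : ℝ,
      a ∈ Set.Icc (lx : ℝ) (hx : ℝ) ∧ b ∈ Set.Icc (ly : ℝ) (hy : ℝ) ∧ a * b = (c : ℝ)) :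
    ∀ c ∈ Set.Icc lz hz, ∀ l h : ℤ,
      Set.image2 (· * ·) (Set.Icc lx hx) (Set.Icc ly hy) ⊆ Set.Icc l h →
        c ∈ Set.Icc l h := by
  intro c hc l h hsub
  -- the four integer corner products lie in [l, h]
  have corner : ∀ u v : ℤ, lx ≤ u → u ≤ hx → ly ≤ v → v ≤ hy → u * v ∈ Set.Icc l h :=
    fun u v h1 h2 h3 h4 => hsub ⟨u, ⟨h1, h2⟩, v, ⟨h3, h4⟩, rfl⟩
  have c1 := corner lx ly le_rfl hx' le_rfl hy'
  have c2 := corner lx hy le_rfl hx' hy' le_rfl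
  have c3 := corner hx ly hx' le_rfl le_rfl hy'
  have c4 := corner hx hy hx' le_rfl hy' le_rfl
  simp only [Set.mem_Icc] at c1 c2 c3 c4 hc ⊢
  -- squeeze lz and hz between the corners
  have key : ∀ d : ℤ, d ∈ ({lz, hz} : Set ℤ) → l ≤ d ∧ d ≤ h := by
    intro d hd
    obtain ⟨a, b, ⟨ha1, ha2⟩, ⟨hb1, hb2⟩, hab⟩ := bcz d hd
    obtain ⟨hlo, hhi⟩ := corner_bounds ha1 ha2 hb1 hb2
    rw [hab] at hlo hhi
    constructor
    · have : (l : ℝ) ≤ (d : ℝ) := by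
        refine le_trans ?_ hlo
        simp only [le_min_iff]
        push_cast
        refine ⟨⟨?_, ?_⟩, ?_, ?_⟩ <;> exact_mod_cast (by omega : l ≤ _)
      exact_mod_cast this
    · have : (d : ℝ) ≤ (h : ℝ) := by
        refine le_trans hhi ?_
        simp only [max_le_iff]
        push_cast
        refine ⟨⟨?_, ?_⟩, ?_, ?_⟩ <;> exact_mod_cast (by omega : _ ≤ h)
      exact_mod_cast this
  obtain ⟨h1, _⟩ := key lz (Or.inl rfl)
  obtain ⟨_, h2⟩ := key hz (Or.inr rfl)
  omega
end

section
/- The converse of the bounds-consistency theorem fails without an extra condition: the CSP ⟨x·y=z; x∈[-2..1], y∈[-3..10], z∈[8..10]⟩ is closed under the MULTIPLICATION 1, 2 and 3 rules (i.e., [8..10] ⊆ int([-2..1]·[-3..10]), [-2..1] ⊆ int([8..10]/[-3..10]), [-3..10] ⊆ int([8..10]/[-2..1])), yet it is not bounds consistent: there are no reals a ∈ [-2,1] and c ∈ [8,10] with a·(-3) = c. -/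
/-- The CSP `⟨x·y=z; x∈[-2..1], y∈[-3..10], z∈[8..10]⟩` is closed under the
MULTIPLICATION 1, 2 and 3 rules, yet it is not bounds consistent: no reals
`a ∈ [-2,1]` and `c ∈ [8,10]` satisfy `a·(-3) = c`. -/
theorem stmt_15 :
    (∀ c ∈ Set.Icc (8 : ℤ) 10, ∀ l h : ℤ,
      Set.image2 (· * ·) (Set.Icc (-2 : ℤ) 1) (Set.Icc (-3 : ℤ) 10) ⊆ Set.Icc l h →
        c ∈ Set.Icc l h) ∧
    (∀ a ∈ Set.Icc (-2 : ℤ) 1, ∀ l h : ℤ,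
      {u : ℤ | ∃ x ∈ Set.Icc (8 : ℤ) 10, ∃ y ∈ Set.Icc (-3 : ℤ) 10, u * y = x} ⊆
        Set.Icc l h → a ∈ Set.Icc l h) ∧
    (∀ b ∈ Set.Icc (-3 : ℤ) 10, ∀ l h : ℤ,
      {u : ℤ | ∃ x ∈ Set.Icc (8 : ℤ) 10, ∃ y ∈ Set.Icc (-2 : ℤ) 1, u * y = x} ⊆
        Set.Icc l h → b ∈ Set.Icc l h) ∧
    ¬ ∃ a c : ℝ, a ∈ Set.Icc (-2 : ℝ) 1 ∧ c ∈ Set.Icc (8 : ℝ) 10 ∧ a * (-3) = c := by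
  refine ⟨?_, ?_, ?_, ?_⟩
  · intro c hc l h hsub
    have h1 : (-20 : ℤ) ∈ Set.Icc l h :=
      hsub (Set.mem_image2.mpr ⟨-2, by norm_num, 10, by norm_num, by norm_num⟩)
    have h2 : (10 : ℤ) ∈ Set.Icc l h :=
      hsub (Set.mem_image2.mpr ⟨1, by norm_num, 10, by norm_num, by norm_num⟩)
    exact ⟨by linarith [hc.1, h1.1], by linarith [hc.2, h2.2]⟩
  · intro a ha l h hsub
    have h1 : (-3 : ℤ) ∈ Set.Icc l h := hsub ⟨9, by norm_num, -3, by norm_num, by norm_num⟩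
    have h2 : (10 : ℤ) ∈ Set.Icc l h := hsub ⟨10, by norm_num, 1, by norm_num, by norm_num⟩
    exact ⟨by linarith [ha.1, h1.1], by linarith [ha.2, h2.2]⟩
  · intro b hb l h hsub
    have h1 : (-8 : ℤ) ∈ Set.Icc l h := hsub ⟨8, by norm_num, -1, by norm_num, by norm_num⟩
    have h2 : (10 : ℤ) ∈ Set.Icc l h := hsub ⟨10, by norm_num, 1, by norm_num, by norm_num⟩
    exact ⟨by linarith [hb.1, h1.1], by linarith [hb.2, h2.2]⟩
  · rintro ⟨a, c, ⟨ha1, ha2⟩, ⟨hc1, hc2⟩, heq⟩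
    linarith
end

section
/- (Bounds consistency theorem 2, z-part.) Let D_x, D_y, D_z be nonempty integer intervals with D_z ⊆ int(D_x·D_y). Then for every c ∈ D_z there exist reals a in the real hull of D_x and b in the real hull of D_y with a·b = c. -/
/-!
The integer products `D_x·D_y` form a finite set, so `int(D_x·D_y)` is the interval between its
least and greatest elements; `c` lies between two integer products `a₁·b₁ ≤ c ≤ a₂·b₂`. The real
product set `[lx, hx]·[ly, hy]` is the continuous image of a connected rectangle, hence an
interval, and it contains both of these products, hence also `c`.
-/

open Set

theorem isPreconnected_image2_mul_Icc {α : Type*} [ConditionallyCompleteLinearOrder α]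
    [TopologicalSpace α] [OrderTopology α] [DenselyOrdered α] [Mul α] [ContinuousMul α]
    (a b c d : α) : IsPreconnected (image2 (· * ·) (Icc a b) (Icc c d)) := by
  rw [← image_prod]
  exact (isPreconnected_Icc.prod isPreconnected_Icc).image _ continuous_mul.continuousOn

theorem Int.cast_mem_image2_mul_Icc {α : Type*} [Ring α] [LinearOrder α] [IsStrictOrderedRing α]
    {lx hx ly hy t : ℤ} (ht : t ∈ image2 (· * ·) (Icc lx hx) (Icc ly hy)) :
    (t : α) ∈ image2 (· * ·) (Icc (lx : α) hx) (Icc (ly : α) hy) := by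
  obtain ⟨a, ⟨hla, hah⟩, b, ⟨hlb, hbh⟩, rfl⟩ := ht
  exact ⟨a, ⟨Int.cast_mono hla, Int.cast_mono hah⟩, b, ⟨Int.cast_mono hlb, Int.cast_mono hbh⟩,
    (Int.cast_mul a b).symm⟩

theorem stmt_16_general (lx hx ly hy lz hz : ℤ)
    (hx' : lx ≤ hx) (hy' : ly ≤ hy)
    (hsub : ∀ c ∈ Set.Icc lz hz, ∀ l h : ℤ,
      Set.image2 (· * ·) (Set.Icc lx hx) (Set.Icc ly hy) ⊆ Set.Icc l h →
        c ∈ Set.Icc l h) :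
    ∀ c ∈ Set.Icc lz hz, ∃ a b : ℝ,
      a ∈ Set.Icc (lx : ℝ) (hx : ℝ) ∧ b ∈ Set.Icc (ly : ℝ) (hy : ℝ) ∧
        a * b = (c : ℝ) := by
  intro c hc
  set T : Set ℤ := image2 (· * ·) (Icc lx hx) (Icc ly hy)
  have hT_finite : T.Finite := (finite_Icc lx hx).image2 _ (finite_Icc ly hy)
  have hT_nonempty : T.Nonempty := (nonempty_Icc.2 hx').image2 (nonempty_Icc.2 hy')
  have hc_between : c ∈ Icc (sInf T) (sSup T) := hsub c hc _ _ fun t ht =>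
    ⟨csInf_le hT_finite.bddBelow ht, le_csSup hT_finite.bddAbove ht⟩
  have hc_mem : (c : ℝ) ∈ image2 (· * ·) (Icc (lx : ℝ) hx) (Icc (ly : ℝ) hy) :=
    (isPreconnected_image2_mul_Icc _ _ _ _).Icc_subset
      (Int.cast_mem_image2_mul_Icc (hT_nonempty.csInf_mem hT_finite))
      (Int.cast_mem_image2_mul_Icc (hT_nonempty.csSup_mem hT_finite))
      ⟨Int.cast_mono hc_between.1, Int.cast_mono hc_between.2⟩
  obtain ⟨a, ha, b, hb, hab⟩ := hc_mem
  exact ⟨a, b, ha, hb, hab⟩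

/-- Bounds consistency theorem 2, z-part: if `D_z ⊆ int(D_x·D_y)` for nonempty integer
intervals, then every `c ∈ D_z` admits a real factorization `c = a·b` with `a` in the
real hull of `D_x` and `b` in the real hull of `D_y`. -/
theorem stmt_16 (lx hx ly hy lz hz : ℤ)
    (hx' : lx ≤ hx) (hy' : ly ≤ hy) (hz' : lz ≤ hz)
    (hsub : ∀ c ∈ Set.Icc lz hz, ∀ l h : ℤ,
      Set.image2 (· * ·) (Set.Icc lx hx) (Set.Icc ly hy) ⊆ Set.Icc l h →
        c ∈ Set.Icc l h) :
    ∀ c ∈ Set.Icc lz hz, ∃ a b : ℝ,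
      a ∈ Set.Icc (lx : ℝ) (hx : ℝ) ∧ b ∈ Set.Icc (ly : ℝ) (hy : ℝ) ∧
        a * b = (c : ℝ) :=
  stmt_16_general lx hx ly hy lz hz hx' hy' hsub
end

section
/- (Bounds consistency theorem 2, x-part.) Let D_x=[l_x..h_x], D_y, D_z be nonempty integer intervals such that 0 ∈ interior(D_x) ∧ 0 ∈ interior(D_y) implies 0 ∈ D_z, and suppose {l_x,h_x} ⊆ int(D_z/D_y) and D_y ⊆ int(D_z/D_x). Then for each a ∈ {l_x,h_x} there exist reals b in the real hull of D_y and c in the real hull of D_z with a·b = c. -/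
lemma bnd_pos (lz hz L u x y : ℤ) (hL : 0 ≤ L) (hzneg : hz < 0)
    (hx1 : lz ≤ x) (hx2 : x ≤ hz) (hy1 : L ≤ y) (heq : u * y = x) :
    lz ≤ u ∧ u ≤ -1 := by
  have hy0 : 0 ≤ y := le_trans hL hy1
  have hxneg : x < 0 := lt_of_le_of_lt hx2 hzneg
  have hy1' : 1 ≤ y := by
    rcases eq_or_lt_of_le hy0 with h | h
    · exfalso; rw [← h] at heq; simp at heq; omega
    · omega
  have hu : u < 0 := by nlinarith
  constructor
  · nlinarith
  · omega

lemma bnd_neg (lz hz H u x y : ℤ) (hH : H ≤ 0) (hzneg : hz < 0)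
    (hx1 : lz ≤ x) (hx2 : x ≤ hz) (hy2 : y ≤ H) (heq : u * y = x) :
    1 ≤ u ∧ u ≤ -lz := by
  have hy0 : y ≤ 0 := le_trans hy2 hH
  have hxneg : x < 0 := lt_of_le_of_lt hx2 hzneg
  have hy1' : y ≤ -1 := by
    rcases eq_or_lt_of_le hy0 with h | h
    · exfalso; rw [h] at heq; simp at heq; omega
    · omega
  have hu : 0 < u := by nlinarith
  constructor
  · omega
  · nlinarith

lemma core (lx hx ly hy lz hz a : ℤ) (ha : 0 ≤ a) (hax : a = lx ∨ a = hx)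
    (hxx : lx ≤ hx) (hyy : ly ≤ hy)
    (h0 : lx < 0 → 0 < hx → ly < 0 → 0 < hy → lz ≤ 0 ∧ 0 ≤ hz)
    (hdx : ∀ l h : ℤ, (∀ u x y : ℤ, lz ≤ x → x ≤ hz → ly ≤ y → y ≤ hy → u * y = x → l ≤ u ∧ u ≤ h) → l ≤ a ∧ a ≤ h)
    (hdy : ∀ b : ℤ, ly ≤ b → b ≤ hy → ∀ l h : ℤ, (∀ u x y : ℤ, lz ≤ x → x ≤ hz → lx ≤ y → y ≤ hx → u * y = x → l ≤ u ∧ u ≤ h) → l ≤ b ∧ b ≤ h) :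
    a * ly ≤ hz ∨ a * hy ≤ hz := by
  by_contra hcon
  push_neg at hcon
  obtain ⟨h1, h2⟩ := hcon
  rcases ha.lt_or_eq with hapos | haz
  · -- 0 < a
    rcases le_or_gt 0 ly with hly | hly
    · -- 0 ≤ ly : S ⊆ [min lz 0, a-1]
      have hres := hdx (min lz 0) (a - 1) ?_
      · omega
      intro u x y hx1 hx2 hy1 hy2 heq
      have hy1' : 1 ≤ y := by
        have hy0 : 0 ≤ y := le_trans hly hy1
        rcases eq_or_lt_of_le hy0 with h | h
        · exfalso
          rw [← h] at heq; simp at heq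
          have hpos : 0 < a * ly := by omega
          have hlypos : 0 < ly := by nlinarith
          omega
        · omega
      constructor
      · rcases le_or_gt 0 u with h | h
        · omega
        · have : lz ≤ u := by nlinarith
          omega
      · have hups : u * y < a * y := by nlinarith
        have : u < a := lt_of_mul_lt_mul_right hups (by omega)
        omega
    · rcases le_or_gt hy 0 with hhy | hhy
      · -- hy ≤ 0 : S ⊆ [a+1, -lz]
        have hzneg : hz < 0 := by nlinarith
        have hres := hdx (a + 1) (-lz) ?_
        · omega
        intro u x y hx1 hx2 hy1 hy2 heq
        obtain ⟨hu1, hu2⟩ := bnd_neg lz hz hy u x y hhy hzneg hx1 hx2 hy2 heq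
        refine ⟨?_, hu2⟩
        by_contra hcon2
        push_neg at hcon2
        have hua : u ≤ a := by omega
        have hly0 : ly ≤ 0 := by omega
        nlinarith
      · -- ly < 0 < hy
        have hzneg : hz < 0 := by nlinarith [mul_pos hapos (neg_pos.mpr hly)]
        have hlx : 0 ≤ lx := by
          by_contra hlx
          push_neg at hlx
          rcases le_or_gt hx 0 with hhx | hhx
          · omega
          · obtain ⟨_, _⟩ := h0 hlx hhx hly hhy; omega
        have hres := hdy hy hyy le_rfl lz (-1) ?_
        · omega
        intro u x y hx1 hx2 hy1 hy2 heq
        exact bnd_pos lz hz lx u x y hlx hzneg hx1 hx2 hy1 heq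
  · -- a = 0
    subst haz
    simp only [zero_mul] at h1 h2
    have hzneg : hz < 0 := h1
    rcases le_or_gt 0 ly with hly | hly
    · have hres := hdx lz (-1) ?_
      · omega
      intro u x y hx1 hx2 hy1 hy2 heq
      exact bnd_pos lz hz ly u x y hly hzneg hx1 hx2 hy1 heq
    · rcases le_or_gt hy 0 with hhy | hhy
      · have hres := hdx 1 (-lz) ?_
        · omega
        intro u x y hx1 hx2 hy1 hy2 heq
        exact bnd_neg lz hz hy u x y hhy hzneg hx1 hx2 hy2 heq
      · have hsplit : 0 ≤ lx ∨ hx ≤ 0 := by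
          by_contra hc
          push_neg at hc
          obtain ⟨_, _⟩ := h0 (by omega) (by omega) hly hhy
          omega
        rcases hsplit with hlx | hhx
        · have hres := hdy hy hyy le_rfl lz (-1) ?_
          · omega
          intro u x y hx1 hx2 hy1 hy2 heq
          exact bnd_pos lz hz lx u x y hlx hzneg hx1 hx2 hy1 heq
        · have hres := hdy ly le_rfl hyy 1 (-lz) ?_
          · omega
          intro u x y hx1 hx2 hy1 hy2 heq
          exact bnd_neg lz hz hx u x y hhx hzneg hx1 hx2 hy2 heq

lemma coreAll (lx hx ly hy lz hz a : ℤ) (hax : a = lx ∨ a = hx)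
    (hxx : lx ≤ hx) (hyy : ly ≤ hy)
    (h0 : lx < 0 → 0 < hx → ly < 0 → 0 < hy → lz ≤ 0 ∧ 0 ≤ hz)
    (hdx : ∀ l h : ℤ, (∀ u x y : ℤ, lz ≤ x → x ≤ hz → ly ≤ y → y ≤ hy → u * y = x → l ≤ u ∧ u ≤ h) → l ≤ a ∧ a ≤ h)
    (hdy : ∀ b : ℤ, ly ≤ b → b ≤ hy → ∀ l h : ℤ, (∀ u x y : ℤ, lz ≤ x → x ≤ hz → lx ≤ y → y ≤ hx → u * y = x → l ≤ u ∧ u ≤ h) → l ≤ b ∧ b ≤ h) :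
    a * ly ≤ hz ∨ a * hy ≤ hz := by
  rcases le_or_gt 0 a with ha | ha
  · exact core lx hx ly hy lz hz a ha hax hxx hyy h0 hdx hdy
  · -- apply core with x,y intervals negated
    have key := core (-hx) (-lx) (-hy) (-ly) lz hz (-a) (by omega)
      (by omega) (by omega) (by omega)
      (fun p q r s => h0 (by omega) (by omega) (by omega) (by omega))
      ?_ ?_
    · rcases key with h | h
      · right; nlinarith
      · left; nlinarith
    · intro l h H
      have := hdx (-h) (-l) ?_
      · omega
      intro u x y hx1 hx2 hy1 hy2 heq
      have := H (-u) x (-y) hx1 hx2 (by omega) (by omega) (by ring_nf; linarith [heq])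
      omega
    · intro b hb1 hb2 l h H
      have := hdy (-b) (by omega) (by omega) (-h) (-l) ?_
      · omega
      intro u x y hx1 hx2 hy1 hy2 heq
      have := H (-u) x (-y) hx1 hx2 (by omega) (by omega) (by ring_nf; linarith [heq])
      omega

/-- Bounds consistency theorem 2, x-part: assume `0 ∈ interior(D_x) ∧ 0 ∈ interior(D_y)`
implies `0 ∈ D_z`, that `{l_x, h_x} ⊆ int(D_z/D_y)`, and that `D_y ⊆ int(D_z/D_x)`.
Then each endpoint `a` of `D_x` has a real solution `a·b = c` with `b`, `c` in the
real hulls of `D_y`, `D_z`. -/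
theorem stmt_17 (lx hx ly hy lz hz : ℤ)
    (hx' : lx ≤ hx) (hy' : ly ≤ hy) (hz' : lz ≤ hz)
    (h0 : ((0 : ℤ) ∈ Set.Ioo lx hx ∧ (0 : ℤ) ∈ Set.Ioo ly hy) → (0 : ℤ) ∈ Set.Icc lz hz)
    (hdx : ∀ a ∈ ({lx, hx} : Set ℤ), ∀ l h : ℤ,
      {u : ℤ | ∃ x ∈ Set.Icc lz hz, ∃ y ∈ Set.Icc ly hy, u * y = x} ⊆ Set.Icc l h →
        a ∈ Set.Icc l h)
    (hdy : ∀ b ∈ Set.Icc ly hy, ∀ l h : ℤ,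
      {u : ℤ | ∃ x ∈ Set.Icc lz hz, ∃ y ∈ Set.Icc lx hx, u * y = x} ⊆ Set.Icc l h →
        b ∈ Set.Icc l h) :
    ∀ a ∈ ({lx, hx} : Set ℤ), ∃ b c : ℝ,
      b ∈ Set.Icc (ly : ℝ) (hy : ℝ) ∧ c ∈ Set.Icc (lz : ℝ) (hz : ℝ) ∧
        (a : ℝ) * b = c := by
  intro a ha
  have hax : a = lx ∨ a = hx := by simpa using ha
  -- unbundled forms of the hypotheses
  have h0' : lx < 0 → 0 < hx → ly < 0 → 0 < hy → lz ≤ 0 ∧ 0 ≤ hz := by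
    intro p q r s
    have := h0 ⟨⟨p, q⟩, ⟨r, s⟩⟩
    exact ⟨this.1, this.2⟩
  have hdx' : ∀ l h : ℤ, (∀ u x y : ℤ, lz ≤ x → x ≤ hz → ly ≤ y → y ≤ hy →
      u * y = x → l ≤ u ∧ u ≤ h) → l ≤ a ∧ a ≤ h := by
    intro l h H
    have := hdx a ha l h ?_
    · exact ⟨this.1, this.2⟩
    rintro u ⟨x, ⟨hx1, hx2⟩, y, ⟨hy1, hy2⟩, heq⟩
    exact H u x y hx1 hx2 hy1 hy2 heq
  have hdy' : ∀ b : ℤ, ly ≤ b → b ≤ hy → ∀ l h : ℤ, (∀ u x y : ℤ, lz ≤ x → x ≤ hz →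
      lx ≤ y → y ≤ hx → u * y = x → l ≤ u ∧ u ≤ h) → l ≤ b ∧ b ≤ h := by
    intro b hb1 hb2 l h H
    have := hdy b ⟨hb1, hb2⟩ l h ?_
    · exact ⟨this.1, this.2⟩
    rintro u ⟨x, ⟨hx1, hx2⟩, y, ⟨hy1, hy2⟩, heq⟩
    exact H u x y hx1 hx2 hy1 hy2 heq
  -- inequality B : min (a*ly) (a*hy) ≤ hz
  have B : a * ly ≤ hz ∨ a * hy ≤ hz :=
    coreAll lx hx ly hy lz hz a hax hx' hy' h0' hdx' hdy'
  -- inequality A : lz ≤ max (a*ly) (a*hy), via negating x and z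
  have A : lz ≤ a * ly ∨ lz ≤ a * hy := by
    have key := coreAll (-hx) (-lx) ly hy (-hz) (-lz) (-a)
      (by omega) (by omega) hy'
      (fun p q r s => by have := h0' (by omega) (by omega) r s; omega)
      ?_ ?_
    · simp only [neg_mul] at key; omega
    · intro l h H
      have := hdx' (-h) (-l) ?_
      · omega
      intro u x y hx1 hx2 hy1 hy2 heq
      have := H (-u) (-x) y (by omega) (by omega) hy1 hy2 (by rw [neg_mul, heq])
      omega
    · intro b hb1 hb2 l h H
      exact hdy' b hb1 hb2 l h (fun u x y hx1 hx2 hy1 hy2 heq =>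
        H u (-x) (-y) (by omega) (by omega) (by omega) (by omega) (by rw [mul_neg, heq]))
  -- construct the witnesses
  set c₀ : ℤ := max lz (min (a * ly) (a * hy)) with hc₀
  have hc1 : lz ≤ c₀ := le_max_left _ _
  have hc2 : c₀ ≤ hz := by omega
  have hc3 : min (a * ly) (a * hy) ≤ c₀ := le_max_right _ _
  have hc4 : c₀ ≤ max (a * ly) (a * hy) := by omega
  have hcz : (c₀ : ℝ) ∈ Set.Icc (lz : ℝ) (hz : ℝ) := by
    constructor <;> exact_mod_cast (by assumption)
  rcases lt_trichotomy a 0 with haneg | ha0 | hapos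
  · -- a < 0 : min = a*hy, max = a*ly
    have hle : a * hy ≤ a * ly := by nlinarith
    have hmin : min (a * ly) (a * hy) = a * hy := by omega
    have hmax : max (a * ly) (a * hy) = a * ly := by omega
    refine ⟨(c₀ : ℝ) / (a : ℝ), (c₀ : ℝ), ⟨?_, ?_⟩, hcz, ?_⟩
    · rw [le_div_iff_of_neg (by exact_mod_cast haneg)]
      have : c₀ ≤ ly * a := by rw [mul_comm]; omega
      exact_mod_cast this
    · rw [div_le_iff_of_neg (by exact_mod_cast haneg)]
      have : hy * a ≤ c₀ := by rw [mul_comm]; omega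
      exact_mod_cast this
    · rw [mul_div_cancel₀]
      exact_mod_cast (by omega : a ≠ 0)
  · -- a = 0
    subst ha0
    refine ⟨(ly : ℝ), 0, ⟨le_refl _, by exact_mod_cast hy'⟩, ?_, by simp⟩
    simp only [zero_mul] at hc3 hc4
    constructor
    · exact_mod_cast (by omega : lz ≤ (0:ℤ))
    · exact_mod_cast (by omega : (0:ℤ) ≤ hz)
  · -- a > 0 : min = a*ly, max = a*hy
    have hle : a * ly ≤ a * hy := by nlinarith
    have hmin : min (a * ly) (a * hy) = a * ly := by omega
    have hmax : max (a * ly) (a * hy) = a * hy := by omega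
    refine ⟨(c₀ : ℝ) / (a : ℝ), (c₀ : ℝ), ⟨?_, ?_⟩, hcz, ?_⟩
    · rw [le_div_iff₀ (by exact_mod_cast hapos)]
      have : ly * a ≤ c₀ := by rw [mul_comm]; omega
      exact_mod_cast this
    · rw [div_le_iff₀ (by exact_mod_cast hapos)]
      have : c₀ ≤ hy * a := by rw [mul_comm]; omega
      exact_mod_cast this
    · rw [mul_div_cancel₀]
      exact_mod_cast (by omega : a ≠ 0)
end

section
/- (Correctness of the LINEAR EQUALITY rule.) Let a_1,...,a_n be non-zero integers, b an integer, and suppose integers d_1 ∈ D_1, ..., d_n ∈ D_n (with D_i integer intervals) satisfy Σ_{i=1}^n a_i·d_i = b. Then for every j, d_j ∈ D_j ∩ ((b - Σ_{i≠j} int(a_i·D_i)) / a_j), where the division of an integer interval by the nonzero integer a_j is {u ∈ ℤ | ∃x in the set, u·a_j = x}. -/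
open Set

theorem mul_mem_uIcc_of_mem_Icc {α : Type*} [Ring α] [LinearOrder α] [IsStrictOrderedRing α]
    {a l h d : α} (hd : d ∈ Icc l h) : a * d ∈ uIcc (a * l) (a * h) := by
  rcases le_total 0 a with ha | ha
  · exact mem_uIcc_of_le (mul_le_mul_of_nonneg_left hd.1 ha) (mul_le_mul_of_nonneg_left hd.2 ha)
  · exact mem_uIcc_of_ge (mul_le_mul_of_nonpos_left hd.2 ha) (mul_le_mul_of_nonpos_left hd.1 ha)

theorem Finset.sum_mem_Icc_of_forall_mem_uIcc {ι α : Type*} [AddCommMonoid α] [LinearOrder α]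
    [IsOrderedAddMonoid α] (s : Finset ι) {f x y : ι → α}
    (hf : ∀ i ∈ s, f i ∈ Set.uIcc (x i) (y i)) :
    ∑ i ∈ s, f i ∈ Set.Icc (∑ i ∈ s, min (x i) (y i)) (∑ i ∈ s, max (x i) (y i)) :=
  ⟨Finset.sum_le_sum fun i hi => (hf i hi).1, Finset.sum_le_sum fun i hi => (hf i hi).2⟩

theorem stmt_19_general (n : ℕ) (a l h d : Fin n → ℤ) (b : ℤ)
    (hd : ∀ i, d i ∈ Set.Icc (l i) (h i))
    (hsum : ∑ i, a i * d i = b) :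
    ∀ j, d j ∈ Set.Icc (l j) (h j) ∧
      d j * a j ∈ Set.Icc
        (b - ∑ i ∈ Finset.univ.erase j, max (a i * l i) (a i * h i))
        (b - ∑ i ∈ Finset.univ.erase j, min (a i * l i) (a i * h i)) := by
  intro j
  have hrest : ∑ i ∈ Finset.univ.erase j, a i * d i ∈
      Icc (∑ i ∈ Finset.univ.erase j, min (a i * l i) (a i * h i))
        (∑ i ∈ Finset.univ.erase j, max (a i * l i) (a i * h i)) :=
    Finset.sum_mem_Icc_of_forall_mem_uIcc _ fun i _ => mul_mem_uIcc_of_mem_Icc (hd i)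
  have hdj : d j * a j = b - ∑ i ∈ Finset.univ.erase j, a i * d i := by
    rw [Finset.sum_erase_eq_sub (Finset.mem_univ j), hsum, sub_sub_cancel, mul_comm]
  rw [hdj]
  exact ⟨hd j, sub_le_sub_left hrest.2 b, sub_le_sub_left hrest.1 b⟩

/-- Correctness of the LINEAR EQUALITY rule: if `d_i ∈ [l_i..h_i]` for all `i`,
the `a_i` are nonzero, and `Σ a_i·d_i = b`, then for every `j`,
`d_j ∈ D_j ∩ ((b - Σ_{i≠j} int(a_i·D_i)) / a_j)`; here
`int(a_i·D_i) = [min (a_i·l_i) (a_i·h_i) .. max (a_i·l_i) (a_i·h_i)]`, and division of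
a set by `a_j` is `{u : ℤ | u·a_j` is in the set `}`. -/
theorem stmt_19 (n : ℕ) (a l h d : Fin n → ℤ) (b : ℤ)
    (ha : ∀ i, a i ≠ 0) (hd : ∀ i, d i ∈ Set.Icc (l i) (h i))
    (hsum : ∑ i, a i * d i = b) :
    ∀ j, d j ∈ Set.Icc (l j) (h j) ∧
      d j * a j ∈ Set.Icc
        (b - ∑ i ∈ Finset.univ.erase j, max (a i * l i) (a i * h i))
        (b - ∑ i ∈ Finset.univ.erase j, min (a i * l i) (a i * h i)) :=
  stmt_19_general n a l h d b hd hsum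
end
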